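/- Let $\omega$ be non-optimal for the concave dual $\max_{\omega\in Z^\perp}\phi^C(\omega)$ and let $\{(x^k,z^k)\}\subset\operatorname{conv}(X)\times Z$ satisfy $z^k\in\arg\min_{z\in Z}\|Qx^k-z\|$ and $(x^k,z^k)\to(x^*,z^*)\in\arg\min\{L_\rho(x,z,\omega):x\in\operatorname{conv}(X),z\in Z\}$. Then for any $\gamma\in(0,1)$, there exists a finite $K$ such that for all $k\ge K$, $\gamma\le\dfrac{\widecheck\phi(\omega+\rho(Qx^k-z^k),x^k)-\widecheck\phi(\omega,x^{k-1})}{\widehat\phi(\omega,x^k,z^k)-\widecheck\phi(\omega,x^{k-1})}\le1$, where $\widehat\phi(\omega,x,z)=L_\rho(x,z,\omega)+\tfrac{\rho}{2}\|Qx-z\|_2^2$. -/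

import Mathlib

open RealInnerProductSpace Filter Topology

noncomputable def phiC {n q : ℕ} (f : EuclideanSpace ℝ (Fin n) → ℝ)
    (Q : EuclideanSpace ℝ (Fin n) →ₗ[ℝ] EuclideanSpace ℝ (Fin q))
    (X : Set (EuclideanSpace ℝ (Fin n))) (ω : EuclideanSpace ℝ (Fin q)) : ℝ :=
  sInf {r : ℝ | ∃ x ∈ convexHull ℝ X, r = f x + ⟪ω, Q x⟫}

noncomputable def phiCheck {n q : ℕ} (f : EuclideanSpace ℝ (Fin n) → ℝ)
    (Q : EuclideanSpace ℝ (Fin n) →ₗ[ℝ] EuclideanSpace ℝ (Fin q))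
    (X : Set (EuclideanSpace ℝ (Fin n))) (ω : EuclideanSpace ℝ (Fin q))
    (xbar : EuclideanSpace ℝ (Fin n)) : ℝ :=
  sInf {r : ℝ | ∃ x ∈ convexHull ℝ X, r = f xbar + ⟪gradient f xbar, x - xbar⟫ + ⟪ω, Q x⟫}

noncomputable def augL {n q : ℕ} (f : EuclideanSpace ℝ (Fin n) → ℝ)
    (Q : EuclideanSpace ℝ (Fin n) →ₗ[ℝ] EuclideanSpace ℝ (Fin q)) (ρ : ℝ)
    (x : EuclideanSpace ℝ (Fin n)) (z ω : EuclideanSpace ℝ (Fin q)) : ℝ :=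
  f x + ⟪ω, Q x⟫ + ρ / 2 * ‖Q x - z‖ ^ 2

/-- `φ̂(ω, x, z) = L_ρ(x,z,ω) + (ρ/2)‖Qx − z‖²`. -/
noncomputable def phiHat {n q : ℕ} (f : EuclideanSpace ℝ (Fin n) → ℝ)
    (Q : EuclideanSpace ℝ (Fin n) →ₗ[ℝ] EuclideanSpace ℝ (Fin q)) (ρ : ℝ)
    (ω : EuclideanSpace ℝ (Fin q)) (x : EuclideanSpace ℝ (Fin n))
    (z : EuclideanSpace ℝ (Fin q)) : ℝ :=
  augL f Q ρ x z ω + ρ / 2 * ‖Q x - z‖ ^ 2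

open Set

/-!
Numerator and denominator converge to the same positive limit.

Since `z*` minimises `‖Qx* - z‖` over `Z`, the residual `Qx* - z*` is orthogonal to `Z`, which
turns `φ̂(ω, x*, z*)` into `f x* + ⟪ω + ρ (Qx* - z*), Qx*⟫`. The first-order optimality
condition of `x*` for `L_ρ(·, z*, ω)` on `conv X` says precisely that `x*` minimises the
linearisation defining `φ̌(ω + ρ (Qx* - z*), x*)`, so this value equals `φ̂(ω, x*, z*)`.
As an infimum of a jointly continuous function over a bounded set, `φ̌` is continuous, so the
numerator and the denominator both tend to `φ̂(ω, x*, z*) - φ̌(ω, x*)`.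

This limit is positive: otherwise `Qx* = z*`, hence `φ̂(ω, x*, z*) = f x* ≥ φ^C(ω')` for every
`ω' ∈ Zᗮ`, while `φ̌(ω, x*) ≤ φ^C(ω)` by the gradient inequality, contradicting the
non-optimality of `ω`. The bound `≤ 1` is `φ̌(ω + ρ (Qx^k - z^k), x^k) ≤ φ̂(ω, x^k, z^k)`,
obtained by evaluating the infimum at `x^k`.
-/
lemma setOf_exists_mem_eq_eq_image {α β : Type*} (s : Set α) (g : α → β) :
    {r | ∃ x ∈ s, r = g x} = g '' s := by
  ext; simp [eq_comm]

lemma csInf_image_closure {α : Type*} [TopologicalSpace α] {g : α → ℝ} (hg : Continuous g)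
    {s : Set α} (hs : s.Nonempty) (hb : BddBelow (g '' closure s)) :
    sInf (g '' closure s) = sInf (g '' s) := by
  have hglb : IsGLB (g '' closure s) (sInf (g '' closure s)) :=
    isGLB_csInf ((hs.mono subset_closure).image g) hb
  rw [← isGLB_iff_of_subset_of_subset_closure (image_mono subset_closure)
    (image_closure_subset_closure_image hg)] at hglb
  exact (hglb.csInf_eq (hs.image g)).symm

lemma Bornology.IsBounded.continuous_sInf_image {γ E : Type*} [TopologicalSpace γ]
    [PseudoMetricSpace E] [ProperSpace E] {F : γ → E → ℝ} (hF : Continuous ↿F) {s : Set E}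
    (hs : Bornology.IsBounded s) (hne : s.Nonempty) : Continuous fun p => sInf (F p '' s) := by
  have hK := hs.isCompact_closure
  have hFp : ∀ p, Continuous (F p) := fun p => hF.comp (Continuous.prodMk_right p)
  have heq : ∀ p, sInf (F p '' s) = sInf (F p '' closure s) := fun p =>
    (csInf_image_closure (hFp p) hne (hK.image (hFp p)).bddBelow).symm
  simp_rw [heq]
  exact hK.continuous_sInf hF

lemma ConvexOn.add_le_of_hasFDerivAt {E : Type*} [NormedAddCommGroup E] [NormedSpace ℝ E]
    {s : Set E} {f : E → ℝ} {f' : E →L[ℝ] ℝ} {a b : E} (hf : ConvexOn ℝ s f) (ha : a ∈ s)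
    (hb : b ∈ s) (hf' : HasFDerivAt f f' a) : f a + f' (b - a) ≤ f b := by
  set ℓ : ℝ →ᵃ[ℝ] E := AffineMap.lineMap a b
  have hline : ConvexOn ℝ (ℓ ⁻¹' s) (f ∘ ℓ) := hf.comp_affineMap ℓ
  have hderiv : HasDerivAt (f ∘ ℓ) (f' (b - a)) 0 := by
    have hf'0 : HasFDerivAt f f' (ℓ 0) := by simpa [ℓ] using hf'
    exact hf'0.comp_hasDerivAt 0 AffineMap.hasDerivAt_lineMap
  have hslope := hline.le_slope_of_hasDerivAt (x := 0) (y := 1) (by simpa [ℓ] using ha)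
    (by simpa [ℓ] using hb) zero_lt_one hderiv
  simp only [ℓ, Function.comp_apply, AffineMap.lineMap_apply_zero, AffineMap.lineMap_apply_one,
    slope_def_field, sub_zero, div_one] at hslope
  linarith

lemma IsMinOn.hasFDerivAt_sub_nonneg {E : Type*} [NormedAddCommGroup E] [NormedSpace ℝ E]
    {s : Set E} {g : E → ℝ} {g' : E →L[ℝ] ℝ} {a v : E} (h : IsMinOn g s a) (hs : Convex ℝ s)
    (ha : a ∈ s) (hv : v ∈ s) (hg : HasFDerivAt g g' a) : 0 ≤ g' (v - a) :=
  h.localize.hasFDerivWithinAt_nonneg hg.hasFDerivWithinAt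
    (sub_mem_posTangentConeAt_of_segment_subset (hs.segment_subset ha hv))

lemma Submodule.inner_sub_eq_zero_of_forall_norm_sub_le {F : Type*} [NormedAddCommGroup F]
    [InnerProductSpace ℝ F] (K : Submodule ℝ F) {u z : F} (hz : z ∈ K)
    (h : ∀ w ∈ K, ‖u - z‖ ≤ ‖u - w‖) : ∀ v ∈ K, ⟪u - z, v⟫ = 0 := by
  refine (K.norm_eq_iInf_iff_real_inner_eq_zero hz).1 (le_antisymm (le_ciInf fun w => h w w.2) ?_)
  exact ciInf_le ⟨0, by rintro _ ⟨w, rfl⟩; positivity⟩ (⟨z, hz⟩ : K)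

lemma ConvexOn.add_inner_gradient_le {E : Type*} [NormedAddCommGroup E] [InnerProductSpace ℝ E]
    [CompleteSpace E] {s : Set E} {f : E → ℝ} {a b : E} (hf : ConvexOn ℝ s f) (ha : a ∈ s)
    (hb : b ∈ s) (hfd : DifferentiableAt ℝ f a) : f a + ⟪gradient f a, b - a⟫ ≤ f b := by
  simpa only [gradient, InnerProductSpace.toDual_symm_apply] using
    hf.add_le_of_hasFDerivAt ha hb hfd.hasFDerivAt

lemma Filter.Tendsto.eventually_le_div_and_div_le_one {ι : Type*} {l : Filter ι} {a b : ι → ℝ}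
    {L γ : ℝ} (ha : Tendsto a l (𝓝 L)) (hb : Tendsto b l (𝓝 L)) (hL : 0 < L)
    (hab : ∀ k, a k ≤ b k) (hγ : γ < 1) : ∀ᶠ k in l, γ ≤ a k / b k ∧ a k / b k ≤ 1 := by
  have hratio : Tendsto (fun k => a k / b k) l (𝓝 1) := by
    rw [← div_self hL.ne']
    exact ha.div hb hL.ne'
  filter_upwards [hratio.eventually (eventually_ge_nhds hγ), hb.eventually (eventually_gt_nhds hL)]
    with k hγk hbk
  exact ⟨hγk, (div_le_one hbk).2 (hab k)⟩

section DualFunctions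

variable {n q : ℕ} {f : EuclideanSpace ℝ (Fin n) → ℝ}
  {Q : EuclideanSpace ℝ (Fin n) →ₗ[ℝ] EuclideanSpace ℝ (Fin q)} {X : Set (EuclideanSpace ℝ (Fin n))}
  {ρ : ℝ} {ω : EuclideanSpace ℝ (Fin q)}

lemma phiCheck_eq_sInf_image (w : EuclideanSpace ℝ (Fin q)) (y : EuclideanSpace ℝ (Fin n)) :
    phiCheck f Q X w y =
      sInf ((fun v => f y + ⟪gradient f y, v - y⟫ + ⟪w, Q v⟫) '' convexHull ℝ X) := by
  rw [phiCheck, setOf_exists_mem_eq_eq_image]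

lemma phiC_eq_sInf_image (w : EuclideanSpace ℝ (Fin q)) :
    phiC f Q X w = sInf ((fun v => f v + ⟪w, Q v⟫) '' convexHull ℝ X) := by
  rw [phiC, setOf_exists_mem_eq_eq_image]

lemma phiCheck_le (hX : Bornology.IsBounded X) (w : EuclideanSpace ℝ (Fin q))
    (y : EuclideanSpace ℝ (Fin n)) {v : EuclideanSpace ℝ (Fin n)} (hv : v ∈ convexHull ℝ X) :
    phiCheck f Q X w y ≤ f y + ⟪gradient f y, v - y⟫ + ⟪w, Q v⟫ := by
  have hQ := Q.continuous_of_finiteDimensional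
  rw [phiCheck_eq_sInf_image]
  refine csInf_le ?_ (mem_image_of_mem _ hv)
  exact ((isBounded_convexHull.2 hX).isCompact_closure.image (by fun_prop)).bddBelow.mono
    (image_mono subset_closure)

lemma le_phiCheck (hXne : X.Nonempty) {w : EuclideanSpace ℝ (Fin q)} {y : EuclideanSpace ℝ (Fin n)}
    {c : ℝ} (h : ∀ v ∈ convexHull ℝ X, c ≤ f y + ⟪gradient f y, v - y⟫ + ⟪w, Q v⟫) :
    c ≤ phiCheck f Q X w y := by
  rw [phiCheck_eq_sInf_image]
  exact le_csInf ((convexHull_nonempty_iff.2 hXne).image _) (forall_mem_image.2 h)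

lemma phiC_le (hX : Bornology.IsBounded X) (hf : Continuous f) (w : EuclideanSpace ℝ (Fin q))
    {v : EuclideanSpace ℝ (Fin n)} (hv : v ∈ convexHull ℝ X) :
    phiC f Q X w ≤ f v + ⟪w, Q v⟫ := by
  have hQ := Q.continuous_of_finiteDimensional
  rw [phiC_eq_sInf_image]
  refine csInf_le ?_ (mem_image_of_mem _ hv)
  exact ((isBounded_convexHull.2 hX).isCompact_closure.image (by fun_prop)).bddBelow.mono
    (image_mono subset_closure)

lemma phiCheck_le_phiC (hf : ConvexOn ℝ univ f) (hfd : Differentiable ℝ f)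
    (hX : Bornology.IsBounded X) (hXne : X.Nonempty) (w : EuclideanSpace ℝ (Fin q))
    (y : EuclideanSpace ℝ (Fin n)) : phiCheck f Q X w y ≤ phiC f Q X w := by
  rw [phiC_eq_sInf_image]
  refine le_csInf ((convexHull_nonempty_iff.2 hXne).image _) (forall_mem_image.2 fun v hv => ?_)
  have hgrad := hf.add_inner_gradient_le (mem_univ y) (mem_univ v) (hfd y)
  have := phiCheck_le (f := f) (Q := Q) hX w y hv
  linarith

lemma continuous_phiCheck (hfd : ContDiff ℝ 1 f) (hX : Bornology.IsBounded X) (hXne : X.Nonempty) :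
    Continuous fun p : EuclideanSpace ℝ (Fin q) × EuclideanSpace ℝ (Fin n) =>
      phiCheck f Q X p.1 p.2 := by
  have hQ := Q.continuous_of_finiteDimensional
  have hf := hfd.continuous
  have hgrad : Continuous (gradient f) :=
    (InnerProductSpace.toDual ℝ _).symm.continuous.comp (hfd.continuous_fderiv one_ne_zero)
  simp_rw [phiCheck_eq_sInf_image]
  exact (isBounded_convexHull.2 hX).continuous_sInf_image (by fun_prop)
    (convexHull_nonempty_iff.2 hXne)

lemma Filter.Tendsto.phiCheck (hfd : ContDiff ℝ 1 f) (hX : Bornology.IsBounded X)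
    (hXne : X.Nonempty) {ι : Type*} {l : Filter ι} {w : ι → EuclideanSpace ℝ (Fin q)}
    {y : ι → EuclideanSpace ℝ (Fin n)} {w₀ : EuclideanSpace ℝ (Fin q)}
    {y₀ : EuclideanSpace ℝ (Fin n)} (hw : Tendsto w l (𝓝 w₀)) (hy : Tendsto y l (𝓝 y₀)) :
    Tendsto (fun k => phiCheck f Q X (w k) (y k)) l (𝓝 (phiCheck f Q X w₀ y₀)) :=
  -- `(· :)` elaborates the composite first; unifying against the goal directly unfolds `phiCheck`
  (((continuous_phiCheck hfd hX hXne).tendsto (w₀, y₀)).comp (hw.prodMk_nhds hy) :)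

lemma phiHat_eq_of_inner_eq_zero {x : EuclideanSpace ℝ (Fin n)} {z : EuclideanSpace ℝ (Fin q)}
    (h : ⟪Q x - z, z⟫ = 0) : phiHat f Q ρ ω x z = f x + ⟪ω + ρ • (Q x - z), Q x⟫ := by
  have hsq : ⟪Q x - z, Q x⟫ = ‖Q x - z‖ ^ 2 := by
    rw [← real_inner_self_eq_norm_sq, inner_sub_right _ (Q x), h, sub_zero]
  rw [phiHat, augL, inner_add_left, real_inner_smul_left, hsq]
  ring

lemma phiCheck_le_phiHat (hX : Bornology.IsBounded X) {x : EuclideanSpace ℝ (Fin n)}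
    {z : EuclideanSpace ℝ (Fin q)} (hx : x ∈ convexHull ℝ X) (h : ⟪Q x - z, z⟫ = 0) :
    phiCheck f Q X (ω + ρ • (Q x - z)) x ≤ phiHat f Q ρ ω x z := by
  simpa [phiHat_eq_of_inner_eq_zero h] using phiCheck_le (f := f) hX (ω + ρ • (Q x - z)) x hx

lemma continuous_phiHat (hf : Continuous f) :
    Continuous fun p : EuclideanSpace ℝ (Fin n) × EuclideanSpace ℝ (Fin q) =>
      phiHat f Q ρ ω p.1 p.2 := by
  have hQ := Q.continuous_of_finiteDimensional
  unfold phiHat augL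
  fun_prop

lemma norm_sub_le_of_augL_le (hρ : 0 < ρ) {x : EuclideanSpace ℝ (Fin n)}
    {z z' : EuclideanSpace ℝ (Fin q)} (h : augL f Q ρ x z ω ≤ augL f Q ρ x z' ω) :
    ‖Q x - z‖ ≤ ‖Q x - z'‖ := by
  rw [augL, augL] at h
  exact (pow_le_pow_iff_left₀ (norm_nonneg _) (norm_nonneg _) two_ne_zero).1 (by nlinarith)

lemma inner_gradient_add_inner_nonneg_of_isMinOn {xs v : EuclideanSpace ℝ (Fin n)}
    {zs : EuclideanSpace ℝ (Fin q)} (hfd : DifferentiableAt ℝ f xs)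
    (hmin : IsMinOn (fun x => augL f Q ρ x zs ω) (convexHull ℝ X) xs)
    (hxs : xs ∈ convexHull ℝ X) (hv : v ∈ convexHull ℝ X) :
    0 ≤ ⟪gradient f xs, v - xs⟫ + ⟪ω + ρ • (Q xs - zs), Q v - Q xs⟫ := by
  set Qc := LinearMap.toContinuousLinearMap Q
  have hlin : HasFDerivAt (fun x => ⟪ω, Q x⟫) ((innerSL ℝ ω).comp Qc) xs :=
    ((innerSL ℝ ω).comp Qc).hasFDerivAt
  have hsq : HasFDerivAt (fun x => ‖Q x - zs‖ ^ 2) (2 • (innerSL ℝ (Q xs - zs)).comp Qc) xs :=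
    (Qc.hasFDerivAt.sub_const zs).norm_sq
  have := hmin.hasFDerivAt_sub_nonneg (convex_convexHull ℝ X) hxs hv
    ((hfd.hasFDerivAt.add hlin).add (hsq.const_mul (ρ / 2)))
  convert this using 1
  simp only [add_apply, ContinuousLinearMap.coe_comp, Function.comp_apply,
    smul_apply, innerSL_apply_apply, Qc, LinearMap.coe_toContinuousLinearMap',
    gradient, InnerProductSpace.toDual_symm_apply, inner_add_left, real_inner_smul_left,
    smul_eq_mul, nsmul_eq_mul, ← map_sub Q]
  ring

lemma phiCheck_eq_phiHat_of_isMinOn (hX : Bornology.IsBounded X) {xs : EuclideanSpace ℝ (Fin n)}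
    {zs : EuclideanSpace ℝ (Fin q)} (hfd : DifferentiableAt ℝ f xs)
    (hmin : IsMinOn (fun x => augL f Q ρ x zs ω) (convexHull ℝ X) xs)
    (hxs : xs ∈ convexHull ℝ X) (h : ⟪Q xs - zs, zs⟫ = 0) :
    phiCheck f Q X (ω + ρ • (Q xs - zs)) xs = phiHat f Q ρ ω xs zs := by
  refine le_antisymm (phiCheck_le_phiHat hX hxs h) (le_phiCheck ?_ fun v hv => ?_)
  · exact convexHull_nonempty_iff.1 ⟨xs, hxs⟩
  have hfoc := inner_gradient_add_inner_nonneg_of_isMinOn hfd hmin hxs hv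
  rw [phiHat_eq_of_inner_eq_zero h]
  rw [inner_sub_right (ω + ρ • (Q xs - zs))] at hfoc
  linarith

lemma phiCheck_lt_phiHat (hf : ConvexOn ℝ univ f) (hfd : Differentiable ℝ f)
    (hX : Bornology.IsBounded X) {Z : Submodule ℝ (EuclideanSpace ℝ (Fin q))} (hρ : 0 < ρ)
    (hω : ω ∈ Zᗮ) (hnotopt : ∃ ω' ∈ Zᗮ, phiC f Q X ω < phiC f Q X ω')
    {xs : EuclideanSpace ℝ (Fin n)} {zs : EuclideanSpace ℝ (Fin q)}
    (hxs : xs ∈ convexHull ℝ X) (hzs : zs ∈ Z) :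
    phiCheck f Q X ω xs < phiHat f Q ρ ω xs zs := by
  obtain ⟨ω', hω', hlt⟩ := hnotopt
  have hhat : phiHat f Q ρ ω xs zs = f xs + ⟪ω, Q xs⟫ + ρ * ‖Q xs - zs‖ ^ 2 := by
    rw [phiHat, augL]; ring
  have hle : phiCheck f Q X ω xs ≤ f xs + ⟪ω, Q xs⟫ := by
    simpa using phiCheck_le (f := f) (Q := Q) hX ω xs hxs
  by_contra! hge
  have hQ : Q xs = zs := by
    have : ‖Q xs - zs‖ ^ 2 ≤ 0 := by nlinarith
    simpa [sub_eq_zero] using this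
  have hzero : ∀ ν ∈ Zᗮ, ⟪ν, Q xs⟫ = 0 := fun ν hν => by
    rw [hQ, real_inner_comm]; exact hν zs hzs
  have hC := phiC_le (Q := Q) hX hfd.continuous ω' hxs
  have hCheck := phiCheck_le_phiC (Q := Q) hf hfd hX
    (convexHull_nonempty_iff.1 ⟨xs, hxs⟩) ω xs
  rw [hzero ω' hω'] at hC
  rw [hhat, hzero ω hω, hQ, sub_self, norm_zero] at hge
  linarith

end DualFunctions

theorem stmt18_general (n q : ℕ) (f : EuclideanSpace ℝ (Fin n) → ℝ)
    (hf : ConvexOn ℝ Set.univ f) (hfd : ContDiff ℝ 1 f)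
    (Q : EuclideanSpace ℝ (Fin n) →ₗ[ℝ] EuclideanSpace ℝ (Fin q))
    (X : Set (EuclideanSpace ℝ (Fin n))) (hX : IsCompact X)
    (Z : Submodule ℝ (EuclideanSpace ℝ (Fin q))) (ρ : ℝ) (hρ : 0 < ρ)
    (ω : EuclideanSpace ℝ (Fin q)) (hω : ω ∈ Zᗮ)
    (hnotopt : ∃ ω' ∈ Zᗮ, phiC f Q X ω < phiC f Q X ω')
    (x : ℕ → EuclideanSpace ℝ (Fin n)) (z : ℕ → EuclideanSpace ℝ (Fin q))
    (hxk : ∀ k, x k ∈ convexHull ℝ X) (hzk : ∀ k, z k ∈ Z)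
    (hzmin : ∀ k, ∀ w ∈ Z, ‖Q (x k) - z k‖ ≤ ‖Q (x k) - w‖)
    (xstar : EuclideanSpace ℝ (Fin n)) (zstar : EuclideanSpace ℝ (Fin q))
    (hxs : xstar ∈ convexHull ℝ X) (hzs : zstar ∈ Z)
    (hmin : ∀ x' ∈ convexHull ℝ X, ∀ z' ∈ Z,
      augL f Q ρ xstar zstar ω ≤ augL f Q ρ x' z' ω)
    (hconv : Tendsto (fun k => (x k, z k)) atTop (𝓝 (xstar, zstar)))
    (γ : ℝ) (hγ : γ ∈ Set.Ioo (0 : ℝ) 1) :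
    ∃ K : ℕ, ∀ k ≥ K,
      γ ≤ (phiCheck f Q X (ω + ρ • (Q (x k) - z k)) (x k) -
            phiCheck f Q X ω (x (k - 1))) /
          (phiHat f Q ρ ω (x k) (z k) - phiCheck f Q X ω (x (k - 1))) ∧
      (phiCheck f Q X (ω + ρ • (Q (x k) - z k)) (x k) -
            phiCheck f Q X ω (x (k - 1))) /
          (phiHat f Q ρ ω (x k) (z k) - phiCheck f Q X ω (x (k - 1))) ≤ 1 := by
  have hXb := hX.isBounded
  have hXne : X.Nonempty := convexHull_nonempty_iff.1 ⟨xstar, hxs⟩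
  have hfdiff := hfd.differentiable one_ne_zero
  have hQ := Q.continuous_of_finiteDimensional
  have horth : ∀ k, ⟪Q (x k) - z k, z k⟫ = 0 := fun k =>
    Z.inner_sub_eq_zero_of_forall_norm_sub_le (hzk k) (hzmin k) _ (hzk k)
  have hzs_min : ∀ w ∈ Z, ‖Q xstar - zstar‖ ≤ ‖Q xstar - w‖ := fun w hw =>
    norm_sub_le_of_augL_le hρ (hmin xstar hxs w hw)
  have hkey : phiCheck f Q X (ω + ρ • (Q xstar - zstar)) xstar = phiHat f Q ρ ω xstar zstar :=
    phiCheck_eq_phiHat_of_isMinOn hXb (hfdiff xstar)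
      (fun x' hx' => hmin x' hx' zstar hzs) hxs
      (Z.inner_sub_eq_zero_of_forall_norm_sub_le hzs hzs_min _ hzs)
  have hx : Tendsto x atTop (𝓝 xstar) := (continuous_fst.tendsto _).comp hconv
  have hz : Tendsto z atTop (𝓝 zstar) := (continuous_snd.tendsto _).comp hconv
  have hprev : Tendsto (fun k => phiCheck f Q X ω (x (k - 1))) atTop
      (𝓝 (phiCheck f Q X ω xstar)) :=
    tendsto_const_nhds.phiCheck hfd hXb hXne (hx.comp (tendsto_sub_atTop_nat 1))
  have hcur : Tendsto (fun k => phiCheck f Q X (ω + ρ • (Q (x k) - z k)) (x k)) atTop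
      (𝓝 (phiHat f Q ρ ω xstar zstar)) :=
    hkey ▸ (tendsto_const_nhds.add ((((hQ.tendsto _).comp hx).sub hz).const_smul ρ)).phiCheck
      hfd hXb hXne hx
  have hhat : Tendsto (fun k => phiHat f Q ρ ω (x k) (z k)) atTop
      (𝓝 (phiHat f Q ρ ω xstar zstar)) :=
    ((continuous_phiHat hfd.continuous).tendsto _).comp hconv
  exact eventually_atTop.1 <| (hcur.sub hprev).eventually_le_div_and_div_le_one (hhat.sub hprev)
    (sub_pos.2 (phiCheck_lt_phiHat hf hfdiff hXb hρ hω hnotopt hxs hzs))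
    (fun k => sub_le_sub_right (phiCheck_le_phiHat hXb (hxk k) (horth k)) _) hγ.2

theorem stmt18 (n q : ℕ) (f : EuclideanSpace ℝ (Fin n) → ℝ)
    (hf : ConvexOn ℝ Set.univ f) (hfd : ContDiff ℝ 1 f)
    (Q : EuclideanSpace ℝ (Fin n) →ₗ[ℝ] EuclideanSpace ℝ (Fin q))
    (X : Set (EuclideanSpace ℝ (Fin n))) (hX : IsCompact X) (hXne : X.Nonempty)
    (Z : Submodule ℝ (EuclideanSpace ℝ (Fin q))) (ρ : ℝ) (hρ : 0 < ρ)
    (ω : EuclideanSpace ℝ (Fin q)) (hω : ω ∈ Zᗮ)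
    (hnotopt : ∃ ω' ∈ Zᗮ, phiC f Q X ω < phiC f Q X ω')
    (x : ℕ → EuclideanSpace ℝ (Fin n)) (z : ℕ → EuclideanSpace ℝ (Fin q))
    (hxk : ∀ k, x k ∈ convexHull ℝ X) (hzk : ∀ k, z k ∈ Z)
    (hzmin : ∀ k, ∀ w ∈ Z, ‖Q (x k) - z k‖ ≤ ‖Q (x k) - w‖)
    (xstar : EuclideanSpace ℝ (Fin n)) (zstar : EuclideanSpace ℝ (Fin q))
    (hxs : xstar ∈ convexHull ℝ X) (hzs : zstar ∈ Z)
    (hmin : ∀ x' ∈ convexHull ℝ X, ∀ z' ∈ Z,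
      augL f Q ρ xstar zstar ω ≤ augL f Q ρ x' z' ω)
    (hconv : Tendsto (fun k => (x k, z k)) atTop (𝓝 (xstar, zstar)))
    (γ : ℝ) (hγ : γ ∈ Set.Ioo (0 : ℝ) 1) :
    ∃ K : ℕ, ∀ k ≥ K,
      γ ≤ (phiCheck f Q X (ω + ρ • (Q (x k) - z k)) (x k) -
            phiCheck f Q X ω (x (k - 1))) /
          (phiHat f Q ρ ω (x k) (z k) - phiCheck f Q X ω (x (k - 1))) ∧
      (phiCheck f Q X (ω + ρ • (Q (x k) - z k)) (x k) -
            phiCheck f Q X ω (x (k - 1))) /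
          (phiHat f Q ρ ω (x k) (z k) - phiCheck f Q X ω (x (k - 1))) ≤ 1 :=
  stmt18_general n q f hf hfd Q X hX Z ρ hρ ω hω hnotopt x z hxk hzk hzmin xstar zstar hxs hzs hmin
    hconv γ hγ
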